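/- arXiv:0903.1401 — 9 statements merged into one kernel-verified Lean document; each statement's English description precedes it below -/
import Mathlib

section
/- Fix nonnegative reals $I_{12}, I_{23}, I_{31}$ and positive reals $l_1, l_2, l_3$. Then there is at most one triple of positive reals $(r_1, r_2, r_3)$ satisfying $r_2^2 + r_3^2 + 2 I_{23} r_2 r_3 = l_1^2$, $r_3^2 + r_1^2 + 2 I_{31} r_3 r_1 = l_2^2$, and $r_1^2 + r_2^2 + 2 I_{12} r_1 r_2 = l_3^2$. -/
/-!
Each squared edge length `a ^ 2 + b ^ 2 + 2 * I * a * b` with `I ≥ 0` is strictly increasing in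
both radii on the positive quadrant. So if one radius vector had a smaller first radius than
another with the same edge lengths, the two edges at vertex 1 would force both other radii to be
larger, and then the opposite edge would be strictly longer.
-/

def edgeSq (I a b : ℝ) : ℝ := a ^ 2 + b ^ 2 + 2 * I * a * b

lemma edgeSq_comm (I a b : ℝ) : edgeSq I a b = edgeSq I b a := by
  unfold edgeSq
  ring

lemma edgeSq_lt_edgeSq {I a b a' b' : ℝ} (hI : 0 ≤ I) (ha : 0 ≤ a) (hb : 0 ≤ b)
    (haa' : a < a') (hbb' : b ≤ b') : edgeSq I a b < edgeSq I a' b' := by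
  have hprod : a * b ≤ a' * b' := mul_le_mul haa'.le hbb' hb (ha.trans haa'.le)
  unfold edgeSq
  nlinarith [mul_nonneg hI (sub_nonneg.2 hprod)]

lemma lt_of_edgeSq_eq_of_lt {I a b a' b' : ℝ} (hI : 0 ≤ I) (ha : 0 ≤ a) (hb : 0 ≤ b)
    (h : edgeSq I a b = edgeSq I a' b') (haa' : a < a') : b' < b := by
  by_contra! hbb'
  exact (edgeSq_lt_edgeSq hI ha hb haa' hbb').ne h

lemma eq_of_edgeSq_left_eq {I a b b' : ℝ} (hI : 0 ≤ I) (ha : 0 ≤ a) (hb : 0 ≤ b) (hb' : 0 ≤ b')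
    (h : edgeSq I a b = edgeSq I a b') : b = b' := by
  rw [edgeSq_comm I a b, edgeSq_comm I a b'] at h
  by_contra hne
  rcases lt_or_gt_of_ne hne with hlt | hlt
  · exact (edgeSq_lt_edgeSq hI hb ha hlt le_rfl).ne h
  · exact (edgeSq_lt_edgeSq hI hb' ha hlt le_rfl).ne' h

lemma not_lt_of_edgeSq_eq {I12 I23 I31 r1 r2 r3 s1 s2 s3 : ℝ}
    (hI12 : 0 ≤ I12) (hI23 : 0 ≤ I23) (hI31 : 0 ≤ I31)
    (hr1 : 0 ≤ r1) (hr2 : 0 ≤ r2) (hr3 : 0 ≤ r3) (hs2 : 0 ≤ s2) (hs3 : 0 ≤ s3)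
    (h1 : edgeSq I23 r2 r3 = edgeSq I23 s2 s3)
    (h2 : edgeSq I31 r3 r1 = edgeSq I31 s3 s1)
    (h3 : edgeSq I12 r1 r2 = edgeSq I12 s1 s2) : ¬ r1 < s1 := by
  intro h
  have hs2r2 : s2 < r2 := lt_of_edgeSq_eq_of_lt hI12 hr1 hr2 h3 h
  rw [edgeSq_comm I31 r3, edgeSq_comm I31 s3] at h2
  have hs3r3 : s3 < r3 := lt_of_edgeSq_eq_of_lt hI31 hr1 hr3 h2 h
  exact (edgeSq_lt_edgeSq hI23 hs2 hs3 hs2r2 hs3r3.le).ne' h1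

theorem euclidean_radius_vector_unique_general
    (I12 I23 I31 l1 l2 l3 : ℝ)
    (hI12 : 0 ≤ I12) (hI23 : 0 ≤ I23) (hI31 : 0 ≤ I31)
    (r1 r2 r3 s1 s2 s3 : ℝ)
    (hr1 : 0 < r1) (hr2 : 0 < r2) (hr3 : 0 < r3)
    (hs1 : 0 < s1) (hs2 : 0 < s2) (hs3 : 0 < s3)
    (e1 : r2 ^ 2 + r3 ^ 2 + 2 * I23 * r2 * r3 = l1 ^ 2)
    (e2 : r3 ^ 2 + r1 ^ 2 + 2 * I31 * r3 * r1 = l2 ^ 2)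
    (e3 : r1 ^ 2 + r2 ^ 2 + 2 * I12 * r1 * r2 = l3 ^ 2)
    (f1 : s2 ^ 2 + s3 ^ 2 + 2 * I23 * s2 * s3 = l1 ^ 2)
    (f2 : s3 ^ 2 + s1 ^ 2 + 2 * I31 * s3 * s1 = l2 ^ 2)
    (f3 : s1 ^ 2 + s2 ^ 2 + 2 * I12 * s1 * s2 = l3 ^ 2) :
    r1 = s1 ∧ r2 = s2 ∧ r3 = s3 := by
  have h1 : edgeSq I23 r2 r3 = edgeSq I23 s2 s3 := e1.trans f1.symm
  have h2 : edgeSq I31 r3 r1 = edgeSq I31 s3 s1 := e2.trans f2.symm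
  have h3 : edgeSq I12 r1 r2 = edgeSq I12 s1 s2 := e3.trans f3.symm
  have hrs1 : r1 = s1 := le_antisymm
    (not_lt.1 (not_lt_of_edgeSq_eq hI12 hI23 hI31 hs1.le hs2.le hs3.le hr2.le hr3.le
      h1.symm h2.symm h3.symm))
    (not_lt.1 (not_lt_of_edgeSq_eq hI12 hI23 hI31 hr1.le hr2.le hr3.le hs2.le hs3.le h1 h2 h3))
  subst hrs1
  rw [edgeSq_comm I31 r3, edgeSq_comm I31 s3] at h2
  exact ⟨rfl, eq_of_edgeSq_left_eq hI12 hr1.le hr2.le hs2.le h3,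
    eq_of_edgeSq_left_eq hI31 hr1.le hr3.le hs3.le h2⟩

theorem euclidean_radius_vector_unique
    (I12 I23 I31 l1 l2 l3 : ℝ)
    (hI12 : 0 ≤ I12) (hI23 : 0 ≤ I23) (hI31 : 0 ≤ I31)
    (hl1 : 0 < l1) (hl2 : 0 < l2) (hl3 : 0 < l3)
    (r1 r2 r3 s1 s2 s3 : ℝ)
    (hr1 : 0 < r1) (hr2 : 0 < r2) (hr3 : 0 < r3)
    (hs1 : 0 < s1) (hs2 : 0 < s2) (hs3 : 0 < s3)
    (e1 : r2 ^ 2 + r3 ^ 2 + 2 * I23 * r2 * r3 = l1 ^ 2)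
    (e2 : r3 ^ 2 + r1 ^ 2 + 2 * I31 * r3 * r1 = l2 ^ 2)
    (e3 : r1 ^ 2 + r2 ^ 2 + 2 * I12 * r1 * r2 = l3 ^ 2)
    (f1 : s2 ^ 2 + s3 ^ 2 + 2 * I23 * s2 * s3 = l1 ^ 2)
    (f2 : s3 ^ 2 + s1 ^ 2 + 2 * I31 * s3 * s1 = l2 ^ 2)
    (f3 : s1 ^ 2 + s2 ^ 2 + 2 * I12 * s1 * s2 = l3 ^ 2) :
    r1 = s1 ∧ r2 = s2 ∧ r3 = s3 :=
  euclidean_radius_vector_unique_general I12 I23 I31 l1 l2 l3 hI12 hI23 hI31 r1 r2 r3 s1 s2 s3 hr1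
    hr2 hr3 hs1 hs2 hs3 e1 e2 e3 f1 f2 f3
end

section
/- Let $l_1, l_2, l_3$ be positive reals satisfying the strict triangle inequalities, and let $r_1, r_2, r_3$ be positive reals with $l_i > r_j$ and $l_i > r_k$ for all $\{i,j,k\} = \{1,2,3\}$. Then $l_1^2 + l_2^2 + l_3^2 + \Xi_1 r_1^2 + \Xi_2 r_2^2 + \Xi_3 r_3^2 > 0$, where $\Xi_1 = (l_1^2 l_2^2 + l_1^2 l_3^2 - l_2^4 - l_3^4)/(l_2^2 l_3^2)$, $\Xi_2 = (l_2^2 l_1^2 + l_2^2 l_3^2 - l_1^4 - l_3^4)/(l_1^2 l_3^2)$, $\Xi_3 = (l_3^2 l_1^2 + l_3^2 l_2^2 - l_1^4 - l_2^4)/(l_1^2 l_2^2)$. -/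
/-!
Put `a = l₁²`, `b = l₂²`, `c = l₃²`, `u = r₁²`, `v = r₂²`, `w = r₃²`. Multiplied by `abc`, the
expression becomes `abc(a + b + c) + au·ξ₁ + bv·ξ₂ + cw·ξ₃`, which is affine in each of `u, v, w`.
Since `aξ₁ + bξ₂ + cξ₃ = 0`, at most two of the `ξᵢ` are negative, and a term with a negative
coefficient is worst when its variable takes its largest allowed value. With one negative
coefficient the bound follows from positivity alone; with two, the worst case equals `lⱼ²lₖ²` times
Heron's `16 · area²`, positive by the triangle inequalities.
-/

/-- With `a = lᵢ²`, `b = lⱼ²`, `c = lₖ²`, `Ξᵢ` is `xi a b c / (b * c)`. -/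
def xi (a b c : ℝ) : ℝ := a * b + a * c - b ^ 2 - c ^ 2

/-- Sixteen times the squared area of a triangle whose squared side lengths are `a`, `b`, `c`. -/
def heron (a b c : ℝ) : ℝ := 2 * (a * b + b * c + c * a) - a ^ 2 - b ^ 2 - c ^ 2

lemma heron_rotate (a b c : ℝ) : heron b c a = heron a b c := by
  unfold heron; ring

lemma heron_sq_pos {l₁ l₂ l₃ : ℝ} (h₁ : 0 < l₁) (h₂ : 0 < l₂) (h₃ : 0 < l₃)
    (t₁ : l₁ < l₂ + l₃) (t₂ : l₂ < l₃ + l₁) (t₃ : l₃ < l₁ + l₂) :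
    0 < heron (l₁ ^ 2) (l₂ ^ 2) (l₃ ^ 2) := by
  have hprod : 0 < (l₁ + l₂ + l₃) * (l₂ + l₃ - l₁) * (l₃ + l₁ - l₂) * (l₁ + l₂ - l₃) := by
    have := add_pos (add_pos h₁ h₂) h₃
    have := sub_pos.2 t₁
    have := sub_pos.2 t₂
    have := sub_pos.2 t₃
    positivity
  convert hprod using 1
  unfold heron
  ring

lemma weighted_sum_xi (a b c : ℝ) : a * xi a b c + b * xi b c a + c * xi c a b = 0 := by
  unfold xi; ring

lemma xi_add_xi (a b c : ℝ) : xi b c a + xi c a b = heron a b c - a * (a + b + c) := by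
  unfold xi heron; ring

lemma pos_add_mul_xi {a b c w : ℝ} (ha : 0 < a) (hb : 0 < b) (hc : 0 < c)
    (hw : 0 ≤ w) (hwa : w ≤ a) (hwb : w ≤ b) :
    0 < a * b * (a + b + c) + w * xi c a b := by
  rcases le_or_gt 0 (xi c a b) with hξ | hξ
  · have := mul_nonneg hw hξ
    have : 0 < a * b * (a + b + c) := by positivity
    linarith
  -- the worst case is `w = min a b`
  rcases le_total a b with hab | hba
  · have : a * xi c a b ≤ w * xi c a b := mul_le_mul_of_nonpos_right hwa hξ.le
    have : 0 < a * (a * (b - a) + 2 * b * c + c * a) := by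
      have := sub_nonneg.2 hab
      positivity
    have : a * b * (a + b + c) + a * xi c a b = a * (a * (b - a) + 2 * b * c + c * a) := by
      unfold xi; ring
    linarith
  · have : b * xi c a b ≤ w * xi c a b := mul_le_mul_of_nonpos_right hwb hξ.le
    have : 0 < b * (b * (a - b) + 2 * a * c + c * b) := by
      have := sub_nonneg.2 hba
      positivity
    have : a * b * (a + b + c) + b * xi c a b = b * (b * (a - b) + 2 * a * c + c * b) := by
      unfold xi; ring
    linarith

lemma pos_add_two_mul_xi {a b c v w : ℝ} (ha : 0 < a) (hb : 0 < b) (hc : 0 < c)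
    (hT : 0 < heron a b c) (hv : 0 ≤ v) (hva : v ≤ a) (hvc : v ≤ c)
    (hw : 0 ≤ w) (hwa : w ≤ a) (hwb : w ≤ b) :
    0 < a * b * c * (a + b + c) + b * v * xi b c a + c * w * xi c a b := by
  have hW := pos_add_mul_xi ha hb hc hw hwa hwb
  have hV := pos_add_mul_xi hc ha hb hv hvc hva
  rcases le_or_gt 0 (xi b c a) with hξb | hξb <;> rcases le_or_gt 0 (xi c a b) with hξc | hξc
  · have := mul_nonneg (mul_nonneg hb.le hv) hξb
    have := mul_nonneg (mul_nonneg hc.le hw) hξc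
    have : 0 < a * b * c * (a + b + c) := by positivity
    linarith
  · have := mul_nonneg (mul_nonneg hb.le hv) hξb
    have := mul_pos hc hW
    linarith
  · have := mul_nonneg (mul_nonneg hc.le hw) hξc
    have := mul_pos hb hV
    linarith
  · -- at `v = c`, `w = b` the sum collapses to `b * c * heron a b c`
    have : b * c * xi b c a ≤ b * v * xi b c a :=
      mul_le_mul_of_nonpos_right (mul_le_mul_of_nonneg_left hvc hb.le) hξb.le
    have : c * b * xi c a b ≤ c * w * xi c a b :=
      mul_le_mul_of_nonpos_right (mul_le_mul_of_nonneg_left hwb hc.le) hξc.le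
    have : a * b * c * (a + b + c) + b * c * xi b c a + c * b * xi c a b = b * c * heron a b c := by
      linear_combination b * c * xi_add_xi a b c
    have := mul_pos (mul_pos hb hc) hT
    linarith

lemma trace_numerator_pos {a b c u v w : ℝ} (ha : 0 < a) (hb : 0 < b) (hc : 0 < c)
    (hT : 0 < heron a b c) (hu : 0 ≤ u) (hub : u ≤ b) (huc : u ≤ c)
    (hv : 0 ≤ v) (hva : v ≤ a) (hvc : v ≤ c) (hw : 0 ≤ w) (hwa : w ≤ a) (hwb : w ≤ b) :
    0 < a * b * c * (a + b + c) + a * u * xi a b c + b * v * xi b c a + c * w * xi c a b := by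
  have hTb : 0 < heron b c a := heron_rotate a b c ▸ hT
  have hTc : 0 < heron c a b := heron_rotate b c a ▸ hTb
  -- since `a * xi a b c + b * xi b c a + c * xi c a b = 0`, some `xi` is nonnegative
  by_cases hξa : 0 ≤ xi a b c
  · have := mul_nonneg (mul_nonneg ha.le hu) hξa
    have := pos_add_two_mul_xi ha hb hc hT hv hva hvc hw hwa hwb
    linarith
  by_cases hξb : 0 ≤ xi b c a
  · have := mul_nonneg (mul_nonneg hb.le hv) hξb
    have := pos_add_two_mul_xi hb hc ha hTb hw hwb hwa hu hub huc
    linarith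
  have hξc : 0 ≤ xi c a b := by
    by_contra! hξc
    have := mul_neg_of_pos_of_neg ha (not_le.1 hξa)
    have := mul_neg_of_pos_of_neg hb (not_le.1 hξb)
    have := mul_neg_of_pos_of_neg hc hξc
    linarith [weighted_sum_xi a b c]
  have := mul_nonneg (mul_nonneg hc.le hw) hξc
  have := pos_add_two_mul_xi hc ha hb hTc hu huc hub hv hvc hva
  linarith

theorem trace_positive_ineq
    (l1 l2 l3 r1 r2 r3 : ℝ)
    (hl1 : 0 < l1) (hl2 : 0 < l2) (hl3 : 0 < l3)
    (t1 : l1 < l2 + l3) (t2 : l2 < l3 + l1) (t3 : l3 < l1 + l2)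
    (hr1 : 0 < r1) (hr2 : 0 < r2) (hr3 : 0 < r3)
    (h12 : l1 > r2) (h13 : l1 > r3)
    (h21 : l2 > r1) (h23 : l2 > r3)
    (h31 : l3 > r1) (h32 : l3 > r2) :
    l1 ^ 2 + l2 ^ 2 + l3 ^ 2
      + (l1 ^ 2 * l2 ^ 2 + l1 ^ 2 * l3 ^ 2 - l2 ^ 4 - l3 ^ 4) / (l2 ^ 2 * l3 ^ 2) * r1 ^ 2
      + (l2 ^ 2 * l1 ^ 2 + l2 ^ 2 * l3 ^ 2 - l1 ^ 4 - l3 ^ 4) / (l1 ^ 2 * l3 ^ 2) * r2 ^ 2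
      + (l3 ^ 2 * l1 ^ 2 + l3 ^ 2 * l2 ^ 2 - l1 ^ 4 - l2 ^ 4) / (l1 ^ 2 * l2 ^ 2) * r3 ^ 2
      > 0 := by
  have sq_le {r l : ℝ} (hr : 0 < r) (h : l > r) : r ^ 2 ≤ l ^ 2 := pow_le_pow_left₀ hr.le h.le 2
  have hnum := trace_numerator_pos (pow_pos hl1 2) (pow_pos hl2 2) (pow_pos hl3 2)
    (heron_sq_pos hl1 hl2 hl3 t1 t2 t3) (sq_nonneg r1) (sq_le hr1 h21) (sq_le hr1 h31)
    (sq_nonneg r2) (sq_le hr2 h12) (sq_le hr2 h32) (sq_nonneg r3) (sq_le hr3 h13) (sq_le hr3 h23)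
  have hden : 0 < l1 ^ 2 * l2 ^ 2 * l3 ^ 2 := by positivity
  refine (div_pos hnum hden).trans_eq ?_
  unfold xi
  field_simp
  ring
end

section
/- Let $r_1, r_2, r_3 > 0$ and let $l_1, l_2, l_3 > 0$ satisfy $l_i^2 \geq r_j^2 + r_k^2$ for all $\{i,j,k\} = \{1,2,3\}$. Then $(r_1^2-r_2^2)(r_3^2-r_1^2) l_1^2 + (r_2^2-r_3^2)(r_1^2-r_2^2) l_2^2 + (r_3^2-r_1^2)(r_2^2-r_3^2) l_3^2 + l_1^2 l_2^2 l_3^2 > 0$. -/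
/-! Put `x = r₂² - r₃²`, `y = r₃² - r₁²`, `z = r₁² - r₂²`. The left-hand side is half of
`(l₁² + x)(l₂² + y)(l₃² + z) + (l₁² - x)(l₂² - y)(l₃² - z)`, and every factor is positive because
`l₁² ≥ r₂² + r₃² > |r₂² - r₃²|`, and likewise for the other two. -/

section

variable {R : Type*} [CommRing R]

theorem add_mul_add_mul_add_add_sub_mul_sub_mul_sub (a b c x y z : R) :
    (a + x) * (b + y) * (c + z) + (a - x) * (b - y) * (c - z)
      = 2 * (a * b * c + a * y * z + b * z * x + c * x * y) := by
  ring

variable [LinearOrder R] [IsStrictOrderedRing R]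

theorem mul_mul_add_cross_terms_pos_of_abs_lt {a b c x y z : R}
    (hx : |x| < a) (hy : |y| < b) (hz : |z| < c) :
    0 < a * b * c + a * y * z + b * z * x + c * x * y := by
  have hsum : 0 < (a + x) * (b + y) * (c + z) + (a - x) * (b - y) * (c - z) := by
    obtain ⟨hx₁, hx₂⟩ := abs_lt.mp hx
    obtain ⟨hy₁, hy₂⟩ := abs_lt.mp hy
    obtain ⟨hz₁, hz₂⟩ := abs_lt.mp hz
    have hplus : 0 < (a + x) * (b + y) * (c + z) := by
      apply mul_pos (mul_pos _ _) _ <;> linarith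
    have hminus : 0 < (a - x) * (b - y) * (c - z) := by
      apply mul_pos (mul_pos _ _) _ <;> linarith
    exact add_pos hplus hminus
  rw [add_mul_add_mul_add_add_sub_mul_sub_mul_sub] at hsum
  exact pos_of_mul_pos_right hsum zero_le_two

theorem abs_sq_sub_sq_lt_of_sq_add_sq_le {p q l : R} (hp : p ≠ 0) (hq : q ≠ 0)
    (h : p ^ 2 + q ^ 2 ≤ l) : |p ^ 2 - q ^ 2| < l := by
  have hp2 : 0 < p ^ 2 := by positivity
  have hq2 : 0 < q ^ 2 := by positivity
  exact abs_sub_lt_iff.mpr ⟨by linarith, by linarith⟩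

end

theorem key_positivity_ineq_general
    (r1 r2 r3 l1 l2 l3 : ℝ)
    (hr1 : 0 < r1) (hr2 : 0 < r2) (hr3 : 0 < r3)
    (h1 : l1 ^ 2 ≥ r2 ^ 2 + r3 ^ 2)
    (h2 : l2 ^ 2 ≥ r3 ^ 2 + r1 ^ 2)
    (h3 : l3 ^ 2 ≥ r1 ^ 2 + r2 ^ 2) :
    (r1 ^ 2 - r2 ^ 2) * (r3 ^ 2 - r1 ^ 2) * l1 ^ 2
      + (r2 ^ 2 - r3 ^ 2) * (r1 ^ 2 - r2 ^ 2) * l2 ^ 2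
      + (r3 ^ 2 - r1 ^ 2) * (r2 ^ 2 - r3 ^ 2) * l3 ^ 2
      + l1 ^ 2 * l2 ^ 2 * l3 ^ 2 > 0 := by
  have key := mul_mul_add_cross_terms_pos_of_abs_lt
    (abs_sq_sub_sq_lt_of_sq_add_sq_le hr2.ne' hr3.ne' h1)
    (abs_sq_sub_sq_lt_of_sq_add_sq_le hr3.ne' hr1.ne' h2)
    (abs_sq_sub_sq_lt_of_sq_add_sq_le hr1.ne' hr2.ne' h3)
  linarith

theorem key_positivity_ineq
    (r1 r2 r3 l1 l2 l3 : ℝ)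
    (hr1 : 0 < r1) (hr2 : 0 < r2) (hr3 : 0 < r3)
    (hl1 : 0 < l1) (hl2 : 0 < l2) (hl3 : 0 < l3)
    (h1 : l1 ^ 2 ≥ r2 ^ 2 + r3 ^ 2)
    (h2 : l2 ^ 2 ≥ r3 ^ 2 + r1 ^ 2)
    (h3 : l3 ^ 2 ≥ r1 ^ 2 + r2 ^ 2) :
    (r1 ^ 2 - r2 ^ 2) * (r3 ^ 2 - r1 ^ 2) * l1 ^ 2
      + (r2 ^ 2 - r3 ^ 2) * (r1 ^ 2 - r2 ^ 2) * l2 ^ 2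
      + (r3 ^ 2 - r1 ^ 2) * (r2 ^ 2 - r3 ^ 2) * l3 ^ 2
      + l1 ^ 2 * l2 ^ 2 * l3 ^ 2 > 0 :=
  key_positivity_ineq_general r1 r2 r3 l1 l2 l3 hr1 hr2 hr3 h1 h2 h3
end

section
/- Let $a, b, c, x, y, z$ be reals with $ax + by + cz = 0$, and define $B_1 = a - b - c - 2by - (a+b-c)x$, $B_2 = b - c - a - 2cz - (b+c-a)y$, $B_3 = c - a - b - 2ax - (c+a-b)z$. Then $B_1 B_2 + B_2 B_3 + B_3 B_1 = (2ab + 2bc + 2ca - a^2 - b^2 - c^2)(xy + yz + zx + 1)$. -/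
theorem B_product_identity
    (a b c x y z : ℝ) (h : a * x + b * y + c * z = 0)
    (B1 B2 B3 : ℝ)
    (hB1 : B1 = a - b - c - 2 * b * y - (a + b - c) * x)
    (hB2 : B2 = b - c - a - 2 * c * z - (b + c - a) * y)
    (hB3 : B3 = c - a - b - 2 * a * x - (c + a - b) * z) :
    B1 * B2 + B2 * B3 + B3 * B1
      = (2 * a * b + 2 * b * c + 2 * c * a - a ^ 2 - b ^ 2 - c ^ 2)
        * (x * y + y * z + z * x + 1) := by
  subst hB1 hB2 hB3
  -- the multiplier is `-2 * (B1 + B2 + B3) - 4 * (a * x + b * y + c * z)`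
  linear_combination 2 * (a + b + c + (a + b - c) * x + (b + c - a) * y + (c + a - b) * z) * h
end

section
/- Let $N$ be a real symmetric $3\times 3$ matrix of the form $N = \begin{pmatrix} -B_2-B_3 & B_3 & B_2 \\ B_3 & -B_3-B_1 & B_1 \\ B_2 & B_1 & -B_1-B_2 \end{pmatrix}$. If $B_1 + B_2 + B_3 < 0$ and $B_1 B_2 + B_2 B_3 + B_3 B_1 > 0$, then $N$ has eigenvalue $0$ with eigenvector $(1,1,1)$ and its other two eigenvalues are positive. -/
open Matrix Polynomial

section ZeroRowSum

variable {R : Type*} [CommRing R]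

def zeroRowSumMatrix (B1 B2 B3 : R) : Matrix (Fin 3) (Fin 3) R :=
  of ![![-B2 - B3, B3, B2], ![B3, -B3 - B1, B1], ![B2, B1, -B1 - B2]]

theorem zeroRowSumMatrix_mulVec_ones (B1 B2 B3 : R) :
    zeroRowSumMatrix B1 B2 B3 *ᵥ ![1, 1, 1] = 0 := by
  ext i
  fin_cases i <;> simp [zeroRowSumMatrix, mulVec, dotProduct, Fin.sum_univ_three] <;> ring

theorem charpoly_zeroRowSumMatrix (B1 B2 B3 : R) :
    (zeroRowSumMatrix B1 B2 B3).charpoly =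
      X * (X ^ 2 + C (2 * (B1 + B2 + B3)) * X + C (3 * (B1 * B2 + B2 * B3 + B3 * B1))) := by
  rw [charpoly, det_fin_three]
  simp [zeroRowSumMatrix, map_ofNat]
  ring

end ZeroRowSum

theorem pos_of_sq_add_mul_add_eq_zero {K : Type*} [Field K] [LinearOrder K] [IsStrictOrderedRing K]
    {x b c : K} (hb : b < 0) (hc : 0 < c) (h : x ^ 2 + b * x + c = 0) : 0 < x := by
  by_contra! hx
  nlinarith [mul_nonneg_of_nonpos_of_nonpos hb.le hx, sq_nonneg x]

theorem eigenvalues_of_zero_row_sum_matrix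
    (B1 B2 B3 : ℝ)
    (hsum : B1 + B2 + B3 < 0)
    (hprod : 0 < B1 * B2 + B2 * B3 + B3 * B1)
    (N : Matrix (Fin 3) (Fin 3) ℝ)
    (hN : N = Matrix.of ![![-B2 - B3, B3, B2], ![B3, -B3 - B1, B1], ![B2, B1, -B1 - B2]]) :
    N.mulVec ![1, 1, 1] = 0 ∧
    ∀ μ : ℝ, μ ∈ spectrum ℝ N → μ ≠ 0 → 0 < μ := by
  change N = zeroRowSumMatrix B1 B2 B3 at hN
  subst hN
  refine ⟨zeroRowSumMatrix_mulVec_ones B1 B2 B3, fun μ hμ hμ0 => ?_⟩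
  rw [mem_spectrum_iff_isRoot_charpoly, charpoly_zeroRowSumMatrix] at hμ
  have hquad : μ ^ 2 + 2 * (B1 + B2 + B3) * μ + 3 * (B1 * B2 + B2 * B3 + B3 * B1) = 0 := by
    simpa [hμ0] using hμ
  exact pos_of_sq_add_mul_add_eq_zero (by linarith) (by linarith) hquad
end

section
/- Let $I_{12}, I_{23}, I_{31} \geq 0$ and let $s > 0$ satisfy $\cosh^2 s > \max(I_{12}-1, I_{23}-1, I_{31}-1)/2$. Define $l_i$ by $\cosh l_i = \cosh^2 s + I_{jk} \sinh^2 s$ for $\{i,j,k\} = \{1,2,3\}$ (with $l_i > 0$). Then $l_1, l_2, l_3$ satisfy the strict triangle inequalities. -/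
/-!
Write `C = cosh² s`, so that `sinh² s = C - 1` and `cosh lₖ = C + I (C - 1) ≥ C` for every side.
For two sides `a, b ≥ 0` with `cosh a, cosh b ≥ C` we get `sinh a sinh b ≥ C² - 1`, hence
`cosh (a + b) ≥ 2 C² - 1`, and `2 C² - 1 > C + I (C - 1)` is `(C - 1) (2 C + 1 - I) > 0`, which is
exactly where `s > 0` and `cosh² s > (I - 1) / 2` enter. Since `cosh` is increasing on `[0, ∞)`,
each side is shorter than the sum of the other two.
-/

open Real

namespace Real

theorem sq_sub_one_le_sinh_mul_sinh {C a b : ℝ} (hC : 1 ≤ C) (ha : 0 ≤ a) (hb : 0 ≤ b)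
    (hCa : C ≤ cosh a) (hCb : C ≤ cosh b) : C ^ 2 - 1 ≤ sinh a * sinh b := by
  have hsa : 0 ≤ sinh a := sinh_nonneg_iff.mpr ha
  have hsb : 0 ≤ sinh b := sinh_nonneg_iff.mpr hb
  have hsq : (C ^ 2 - 1) ^ 2 ≤ (sinh a * sinh b) ^ 2 := by
    rw [mul_pow, sinh_sq, sinh_sq, sq]
    gcongr <;> nlinarith
  exact (pow_le_pow_iff_left₀ (by nlinarith) (mul_nonneg hsa hsb) two_ne_zero).mp hsq

theorem two_mul_sq_sub_one_le_cosh_add {C a b : ℝ} (hC : 1 ≤ C) (ha : 0 ≤ a) (hb : 0 ≤ b)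
    (hCa : C ≤ cosh a) (hCb : C ≤ cosh b) : 2 * C ^ 2 - 1 ≤ cosh (a + b) := by
  have hcosh : C ^ 2 ≤ cosh a * cosh b := by
    rw [sq]
    exact mul_le_mul hCa hCb (by linarith) (by linarith)
  rw [cosh_add]
  linarith [sq_sub_one_le_sinh_mul_sinh hC ha hb hCa hCb]

theorem lt_of_cosh_lt_cosh {x y : ℝ} (hy : 0 ≤ y) (h : cosh x < cosh y) : x < y := by
  rw [cosh_lt_cosh, abs_of_nonneg hy] at h
  exact (le_abs_self x).trans_lt h

/-- The triangle inequality for one side of a hyperbolic triangle whose side lengths are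
given by inversive distances between circles of a common radius, with `C = cosh² r`. -/
theorem lt_add_of_cosh_eq {C I a b c : ℝ} (hC : 1 < C) (hI : I < 2 * C + 1)
    (ha : 0 ≤ a) (hb : 0 ≤ b) (hCa : C ≤ cosh a) (hCb : C ≤ cosh b)
    (hc : cosh c = C + I * (C - 1)) : c < a + b := by
  refine lt_of_cosh_lt_cosh (add_nonneg ha hb) ?_
  calc cosh c = C + I * (C - 1) := hc
    _ < 2 * C ^ 2 - 1 := by nlinarith [mul_pos (sub_pos.mpr hC) (sub_pos.mpr hI)]
    _ ≤ cosh (a + b) := two_mul_sq_sub_one_le_cosh_add hC.le ha hb hCa hCb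

end Real

theorem equal_radii_admissible
    (I12 I23 I31 s : ℝ)
    (hI12 : 0 ≤ I12) (hI23 : 0 ≤ I23) (hI31 : 0 ≤ I31)
    (hs : 0 < s)
    (hbig : Real.cosh s ^ 2 > max (max (I12 - 1) (I23 - 1)) (I31 - 1) / 2)
    (l1 l2 l3 : ℝ) (hl1 : 0 < l1) (hl2 : 0 < l2) (hl3 : 0 < l3)
    (c1 : Real.cosh l1 = Real.cosh s ^ 2 + I23 * Real.sinh s ^ 2)
    (c2 : Real.cosh l2 = Real.cosh s ^ 2 + I31 * Real.sinh s ^ 2)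
    (c3 : Real.cosh l3 = Real.cosh s ^ 2 + I12 * Real.sinh s ^ 2) :
    l1 < l2 + l3 ∧ l2 < l3 + l1 ∧ l3 < l1 + l2 := by
  set C := cosh s ^ 2
  have hC : 1 < C := one_lt_pow₀ (one_lt_cosh.mpr hs.ne') two_ne_zero
  have hsinh : sinh s ^ 2 = C - 1 := sinh_sq s
  rw [hsinh] at c1 c2 c3
  have le_cosh {I l : ℝ} (hI : 0 ≤ I) (hl : cosh l = C + I * (C - 1)) : C ≤ cosh l := by
    rw [hl]
    nlinarith
  have h1 := le_cosh hI23 c1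
  have h2 := le_cosh hI31 c2
  have h3 := le_cosh hI12 c3
  rw [gt_iff_lt, div_lt_iff₀ (two_pos : (0 : ℝ) < 2), max_lt_iff, max_lt_iff] at hbig
  obtain ⟨⟨hb12, hb23⟩, hb31⟩ := hbig
  exact ⟨lt_add_of_cosh_eq hC (by linarith) hl2.le hl3.le h2 h3 c1,
    lt_add_of_cosh_eq hC (by linarith) hl3.le hl1.le h3 h1 c2,
    lt_add_of_cosh_eq hC (by linarith) hl1.le hl2.le h1 h2 c3⟩
end

section
/- For reals $a, b > 1$, the inequality $ab - \sqrt{(a^2-1)(b^2-1)} \geq \dfrac{a^2 + b^2 + a + b}{2ab + a + b}$ holds. -/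
/-!
With `D = 2ab + a + b` and `N = ab·D - (a² + b² + a + b)`, the claim reads `√((a²-1)(b²-1)) ≤ N / D`.
Both sides are nonnegative, and after squaring it follows from the identity
`N² - (a²-1)(b²-1)·D² = 2(a-b)²(a+b)(a+1)(b+1)`.
-/

lemma sq_sub_sub_one_mul_sub_one_mul_sq (a b : ℝ) :
    (a * b * (2 * a * b + a + b) - (a ^ 2 + b ^ 2 + a + b)) ^ 2
        - (a ^ 2 - 1) * (b ^ 2 - 1) * (2 * a * b + a + b) ^ 2
      = 2 * (a - b) ^ 2 * (a + b) * (a + 1) * (b + 1) := by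
  ring

lemma sub_one_mul_sub_one_mul_sq_le {a b : ℝ} (ha : -1 ≤ a) (hb : -1 ≤ b) (hab : 0 ≤ a + b) :
    (a ^ 2 - 1) * (b ^ 2 - 1) * (2 * a * b + a + b) ^ 2
      ≤ (a * b * (2 * a * b + a + b) - (a ^ 2 + b ^ 2 + a + b)) ^ 2 := by
  have h : 0 ≤ 2 * (a - b) ^ 2 * (a + b) * (a + 1) * (b + 1) := by
    have := mul_nonneg (mul_nonneg (sq_nonneg (a - b)) hab)
      (mul_nonneg (neg_le_iff_add_nonneg.mp ha) (neg_le_iff_add_nonneg.mp hb))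
    linarith
  linarith [sq_sub_sub_one_mul_sub_one_mul_sq a b]

lemma mul_mul_sub_nonneg {a b : ℝ} (ha : 1 ≤ a) (hb : 1 ≤ b) :
    0 ≤ a * b * (2 * a * b + a + b) - (a ^ 2 + b ^ 2 + a + b) := by
  nlinarith [mul_le_mul ha hb zero_le_one (by linarith)]

theorem sqrt_ineq_ab
    (a b : ℝ) (ha : 1 < a) (hb : 1 < b) :
    a * b - Real.sqrt ((a ^ 2 - 1) * (b ^ 2 - 1))
      ≥ (a ^ 2 + b ^ 2 + a + b) / (2 * a * b + a + b) := by
  have hD : 0 < 2 * a * b + a + b := by positivity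
  have hN := mul_mul_sub_nonneg ha.le hb.le
  have hsq := sub_one_mul_sub_one_mul_sq_le (a := a) (b := b) (by linarith) (by linarith)
    (by linarith)
  have hrhs : a * b - (a ^ 2 + b ^ 2 + a + b) / (2 * a * b + a + b)
      = (a * b * (2 * a * b + a + b) - (a ^ 2 + b ^ 2 + a + b)) / (2 * a * b + a + b) := by
    field_simp
  rw [ge_iff_le, le_sub_comm, hrhs, Real.sqrt_le_iff]
  exact ⟨div_nonneg hN hD.le, by rwa [div_pow, le_div_iff₀ (by positivity)]⟩
end

section
/- Let $l_1, l_2, l_3$ be the side lengths of a hyperbolic triangle (positive reals satisfying the strict triangle inequalities). Then $\cosh l_1 > \dfrac{\cosh^2 l_2 + \cosh^2 l_3 + \cosh l_2 + \cosh l_3}{2 \cosh l_2 \cosh l_3 + \cosh l_2 + \cosh l_3}$. -/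
/-!
The triangle inequalities `l₂ < l₃ + l₁` and `l₃ < l₁ + l₂` give `|l₂ - l₃| < l₁`, hence
`cosh (l₂ - l₃) < cosh l₁`. With `a = cosh l₂`, `b = cosh l₃`, `q = cosh (l₂ - l₃)` the addition
formula gives `2abq = q² + a² + b² - 1`, so
`(2ab + a + b) q - (a² + b² + a + b) = (q - 1)(q + 1 + a + b) ≥ 0`.
-/

namespace Real

theorem two_mul_cosh_mul_cosh_mul_cosh_sub (x y : ℝ) :
    2 * cosh x * cosh y * cosh (x - y) = cosh (x - y) ^ 2 + cosh x ^ 2 + cosh y ^ 2 - 1 := by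
  have hsinh_prod : (sinh x * sinh y) ^ 2 = (cosh x ^ 2 - 1) * (cosh y ^ 2 - 1) := by
    rw [mul_pow, sinh_sq, sinh_sq]
  rw [cosh_sub]
  linear_combination -hsinh_prod

theorem div_le_cosh_sub (x y : ℝ) :
    (cosh x ^ 2 + cosh y ^ 2 + cosh x + cosh y) / (2 * cosh x * cosh y + cosh x + cosh y)
      ≤ cosh (x - y) := by
  have ha := one_le_cosh x
  have hb := one_le_cosh y
  have hq := one_le_cosh (x - y)
  have hfactor : (2 * cosh x * cosh y + cosh x + cosh y) * cosh (x - y)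
      - (cosh x ^ 2 + cosh y ^ 2 + cosh x + cosh y)
      = (cosh (x - y) - 1) * (cosh (x - y) + 1 + cosh x + cosh y) := by
    linear_combination two_mul_cosh_mul_cosh_mul_cosh_sub x y
  rw [div_le_iff₀ (by positivity)]
  have hprod_nonneg : 0 ≤ (cosh (x - y) - 1) * (cosh (x - y) + 1 + cosh x + cosh y) :=
    mul_nonneg (by linarith) (by linarith)
  linarith

end Real

theorem cosh_minor_positive_general
    (l1 l2 l3 : ℝ)
    (t2 : l2 < l3 + l1) (t3 : l3 < l1 + l2) :
    Real.cosh l1 >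
      (Real.cosh l2 ^ 2 + Real.cosh l3 ^ 2 + Real.cosh l2 + Real.cosh l3)
        / (2 * Real.cosh l2 * Real.cosh l3 + Real.cosh l2 + Real.cosh l3) := by
  have hsub : |l2 - l3| < |l1| :=
    (abs_sub_lt_iff.2 ⟨by linarith, by linarith⟩).trans_le (le_abs_self l1)
  calc _ ≤ Real.cosh (l2 - l3) := Real.div_le_cosh_sub l2 l3
    _ < Real.cosh l1 := Real.cosh_lt_cosh.2 hsub

theorem cosh_minor_positive
    (l1 l2 l3 : ℝ)
    (hl1 : 0 < l1) (hl2 : 0 < l2) (hl3 : 0 < l3)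
    (t1 : l1 < l2 + l3) (t2 : l2 < l3 + l1) (t3 : l3 < l1 + l2) :
    Real.cosh l1 >
      (Real.cosh l2 ^ 2 + Real.cosh l3 ^ 2 + Real.cosh l2 + Real.cosh l3)
        / (2 * Real.cosh l2 * Real.cosh l3 + Real.cosh l2 + Real.cosh l3) :=
  cosh_minor_positive_general l1 l2 l3 t2 t3
end

section
/- Let $a = \cosh l_1$, $b = \cosh l_2$, $c = \cosh l_3$ with $l_1,l_2,l_3$ sides of a hyperbolic triangle, and $x = \cosh r_1$, $y = \cosh r_2$, $z = \cosh r_3$. Then the matrix $M = G \cdot D \cdot K$ is symmetric, where $G = \begin{pmatrix} 1-a^2 & ab-c & ca-b \\ ab-c & 1-b^2 & bc-a \\ ca-b & bc-a & 1-c^2 \end{pmatrix}$, $D = \mathrm{diag}(\tfrac{1}{a^2-1}, \tfrac{1}{b^2-1}, \tfrac{1}{c^2-1})$, and $K = \begin{pmatrix} 0 & ay-z & az-y \\ bx-z & 0 & bz-x \\ cx-y & cy-x & 0 \end{pmatrix}$. In particular $M_{12} = M_{21} = z - \frac{ac-b}{c^2-1} x - \frac{bc-a}{c^2-1} y$ and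 the analogous identities hold for the other off-diagonal pairs. -/
/-!
The diagonal of `G D` is `-1` and `K` has zero diagonal, so for `i ≠ j` with third index `k`
the entry `(G D K)ᵢⱼ` is `-Kᵢⱼ` plus the single term `Gᵢₖ Kₖⱼ / (cₖ² - 1)`. Writing
`(a, b, c) = (c₁, c₂, c₃)` and `(x, y, z) = (r₁, r₂, r₃)`, this simplifies to
`rₖ - ((cᵢ cₖ - cⱼ) rᵢ + (cⱼ cₖ - cᵢ) rⱼ) / (cₖ² - 1)`, which is symmetric in `i` and `j`.
The identity is purely algebraic; `cosh² l - 1 = sinh² l ≠ 0` only rules out division by zero.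
-/

open Matrix

namespace HyperbolicJacobian

variable {F : Type*} [Field F]

def gram (a b c : F) : Matrix (Fin 3) (Fin 3) F :=
  of ![![1 - a ^ 2, a * b - c, c * a - b],
       ![a * b - c, 1 - b ^ 2, b * c - a],
       ![c * a - b, b * c - a, 1 - c ^ 2]]

def scaling (a b c : F) : Matrix (Fin 3) (Fin 3) F :=
  diagonal ![1 / (a ^ 2 - 1), 1 / (b ^ 2 - 1), 1 / (c ^ 2 - 1)]

def radial (a b c x y z : F) : Matrix (Fin 3) (Fin 3) F :=
  of ![![0, a * y - z, a * z - y],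
       ![b * x - z, 0, b * z - x],
       ![c * x - y, c * y - x, 0]]

/-- The entry of `gram * scaling * radial` at indices `i ≠ j` carrying `cosh lᵢ = p`,
`cosh lⱼ = q` and radii `u, v`; the third index carries `s` and `w`. -/
def offDiagEntry (p q s u v w : F) : F :=
  w - (p * s - q) / (s ^ 2 - 1) * u - (q * s - p) / (s ^ 2 - 1) * v

theorem offDiagEntry_comm (p q s u v w : F) :
    offDiagEntry p q s u v w = offDiagEntry q p s v u w := by
  unfold offDiagEntry
  ring

theorem gram_mul_scaling_mul_radial {a b c : F} (x y z : F)
    (ha : a ^ 2 - 1 ≠ 0) (hb : b ^ 2 - 1 ≠ 0) (hc : c ^ 2 - 1 ≠ 0) :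
    gram a b c * scaling a b c * radial a b c x y z =
      of ![![(a * b - c) * (b * x - z) / (b ^ 2 - 1) + (c * a - b) * (c * x - y) / (c ^ 2 - 1),
             offDiagEntry a b c x y z, offDiagEntry a c b x z y],
           ![offDiagEntry b a c y x z,
             (a * b - c) * (a * y - z) / (a ^ 2 - 1) + (b * c - a) * (c * y - x) / (c ^ 2 - 1),
             offDiagEntry b c a y z x],
           ![offDiagEntry c a b z x y, offDiagEntry c b a z y x,
             (c * a - b) * (a * z - y) / (a ^ 2 - 1) + (b * c - a) * (b * z - x) / (b ^ 2 - 1)]] := by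
  rw [gram, scaling, radial, diagonal_fin_three, mul_fin_three, mul_fin_three]
  ext i j
  fin_cases i <;> fin_cases j <;> simp [offDiagEntry] <;> field_simp <;> ring

theorem gram_mul_scaling_mul_radial_isSymm {a b c : F} (x y z : F)
    (ha : a ^ 2 - 1 ≠ 0) (hb : b ^ 2 - 1 ≠ 0) (hc : c ^ 2 - 1 ≠ 0) :
    (gram a b c * scaling a b c * radial a b c x y z).IsSymm := by
  rw [gram_mul_scaling_mul_radial x y z ha hb hc]
  refine IsSymm.ext fun i j => ?_
  fin_cases i <;> fin_cases j <;> simp [offDiagEntry_comm]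

end HyperbolicJacobian

theorem Real.cosh_sq_sub_one_ne_zero {l : ℝ} (hl : l ≠ 0) : Real.cosh l ^ 2 - 1 ≠ 0 := by
  rw [Real.cosh_sq, add_sub_cancel_right]
  exact pow_ne_zero 2 (Real.sinh_ne_zero.mpr hl)

open HyperbolicJacobian in
theorem hyperbolic_jacobian_symmetric_general
    (l1 l2 l3 : ℝ)
    (hl1 : 0 < l1) (hl2 : 0 < l2) (hl3 : 0 < l3)
    (a b c x y z : ℝ)
    (ha : a = Real.cosh l1) (hb : b = Real.cosh l2) (hc : c = Real.cosh l3)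
    (G D K M : Matrix (Fin 3) (Fin 3) ℝ)
    (hG : G = Matrix.of ![![1 - a ^ 2, a * b - c, c * a - b],
                          ![a * b - c, 1 - b ^ 2, b * c - a],
                          ![c * a - b, b * c - a, 1 - c ^ 2]])
    (hD : D = Matrix.diagonal ![1 / (a ^ 2 - 1), 1 / (b ^ 2 - 1), 1 / (c ^ 2 - 1)])
    (hK : K = Matrix.of ![![0, a * y - z, a * z - y],
                          ![b * x - z, 0, b * z - x],
                          ![c * x - y, c * y - x, 0]])
    (hM : M = G * D * K) :
    M.IsSymm ∧
    M 0 1 = z - (a * c - b) / (c ^ 2 - 1) * x - (b * c - a) / (c ^ 2 - 1) * y ∧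
    M 1 0 = z - (a * c - b) / (c ^ 2 - 1) * x - (b * c - a) / (c ^ 2 - 1) * y := by
  have ha1 : a ^ 2 - 1 ≠ 0 := ha ▸ Real.cosh_sq_sub_one_ne_zero hl1.ne'
  have hb1 : b ^ 2 - 1 ≠ 0 := hb ▸ Real.cosh_sq_sub_one_ne_zero hl2.ne'
  have hc1 : c ^ 2 - 1 ≠ 0 := hc ▸ Real.cosh_sq_sub_one_ne_zero hl3.ne'
  have hM' : M = gram a b c * scaling a b c * radial a b c x y z := by
    rw [hM, hG, hD, hK]; rfl
  refine ⟨hM' ▸ gram_mul_scaling_mul_radial_isSymm x y z ha1 hb1 hc1, ?_, ?_⟩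
  · rw [hM', gram_mul_scaling_mul_radial x y z ha1 hb1 hc1]
    rfl
  · rw [hM', gram_mul_scaling_mul_radial x y z ha1 hb1 hc1]
    exact offDiagEntry_comm b a c y x z

theorem hyperbolic_jacobian_symmetric
    (l1 l2 l3 r1 r2 r3 : ℝ)
    (hl1 : 0 < l1) (hl2 : 0 < l2) (hl3 : 0 < l3)
    (t1 : l1 < l2 + l3) (t2 : l2 < l3 + l1) (t3 : l3 < l1 + l2)
    (a b c x y z : ℝ)
    (ha : a = Real.cosh l1) (hb : b = Real.cosh l2) (hc : c = Real.cosh l3)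
    (hx : x = Real.cosh r1) (hy : y = Real.cosh r2) (hz : z = Real.cosh r3)
    (G D K M : Matrix (Fin 3) (Fin 3) ℝ)
    (hG : G = Matrix.of ![![1 - a ^ 2, a * b - c, c * a - b],
                          ![a * b - c, 1 - b ^ 2, b * c - a],
                          ![c * a - b, b * c - a, 1 - c ^ 2]])
    (hD : D = Matrix.diagonal ![1 / (a ^ 2 - 1), 1 / (b ^ 2 - 1), 1 / (c ^ 2 - 1)])
    (hK : K = Matrix.of ![![0, a * y - z, a * z - y],
                          ![b * x - z, 0, b * z - x],
                          ![c * x - y, c * y - x, 0]])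
    (hM : M = G * D * K) :
    M.IsSymm ∧
    M 0 1 = z - (a * c - b) / (c ^ 2 - 1) * x - (b * c - a) / (c ^ 2 - 1) * y ∧
    M 1 0 = z - (a * c - b) / (c ^ 2 - 1) * x - (b * c - a) / (c ^ 2 - 1) * y :=
  hyperbolic_jacobian_symmetric_general l1 l2 l3 hl1 hl2 hl3 a b c x y z ha hb hc G D K M hG hD hK
    hM
end
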